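/- Let V be a ℚ-vector space, r ≥ 2, and let w_{1,1}, …, w_{1,r}, w_{2,1}, …, w_{2,r} ∈ V. Let r₁, r₂ be positive rationals, ♠ ∈ {0, 1}, and a₂, …, a_r ∈ ℚ. Assume: (i) w_{1,1} + ⋯ + w_{1,r} = 0; (ii) w_{2,1} + ⋯ + w_{2,r} = (1 − ♠)·w_{2,1}; (iii) r₁·w_{1,1} + r₂·w_{2,1} = 0; (iv) w_{1,i} − w_{2,i} = a_i·r₁·w_{1,1} for each i = 2, …, r; and (v) w_{1,1} ≠ 0. Then a₂ + ⋯ + a_r = −1/r₁ − ♠/r₂. -/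
import Mathlib


/-- Degree computation along a compact edge of an FTCY graph: given vectors
`w_{1,i}, w_{2,i}` in a `ℚ`-vector space `V` (indexed by `Fin r`, `r ≥ 2`, with index `0`
playing the role of the edge direction), positive rationals `r₁, r₂`, `♠ ∈ {0, 1}`, and
rationals `a_i` satisfying the FTCY compatibility conditions, the degrees sum to
`∑_{i ≠ 0} a_i = −1/r₁ − ♠/r₂`. -/
theorem ftcy_edge_degree_sum (V : Type*) [AddCommGroup V] [Module ℚ V]
    (r : ℕ) (hr : 2 ≤ r) (w₁ w₂ : Fin r → V)
    (r₁ r₂ : ℚ) (hr₁ : 0 < r₁) (hr₂ : 0 < r₂)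
    (sp : ℚ) (hsp : sp = 0 ∨ sp = 1) (a : Fin r → ℚ)
    (h1 : ∑ i, w₁ i = 0)
    (h2 : ∑ i, w₂ i = (1 - sp) • w₂ ⟨0, by omega⟩)
    (h3 : r₁ • w₁ ⟨0, by omega⟩ + r₂ • w₂ ⟨0, by omega⟩ = 0)
    (h4 : ∀ i : Fin r, i ≠ ⟨0, by omega⟩ →
      w₁ i - w₂ i = (a i * r₁) • w₁ ⟨0, by omega⟩)
    (h5 : w₁ ⟨0, by omega⟩ ≠ 0) :
    ∑ i ∈ Finset.univ.erase ⟨0, by omega⟩, a i = -1 / r₁ - sp / r₂ := by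
  set z : Fin r := ⟨0, by omega⟩
  -- w₂ z in terms of w₁ z
  have hw2 : w₂ z = (-(r₁/r₂)) • w₁ z := by
    have h3' : r₂ • w₂ z = -(r₁ • w₁ z) := by
      rw [eq_neg_iff_add_eq_zero, add_comm]; exact h3
    have : w₂ z = (r₂⁻¹) • (r₂ • w₂ z) := by
      rw [smul_smul, inv_mul_cancel₀ hr₂.ne', one_smul]
    rw [this, h3', smul_neg, smul_smul]
    rw [← neg_smul]; ring_nf
  -- sum of differences
  have key : ((∑ i ∈ Finset.univ.erase z, a i) * r₁) • w₁ z
      = (-1 - sp * (r₁ / r₂)) • w₁ z := by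
    have hs : ∑ i ∈ Finset.univ.erase z, (w₁ i - w₂ i)
        = ((∑ i ∈ Finset.univ.erase z, a i) * r₁) • w₁ z := by
      rw [Finset.sum_congr rfl (fun i hi => h4 i (Finset.ne_of_mem_erase hi)),
        ← Finset.sum_smul, ← Finset.sum_mul]
    rw [← hs]
    have e1 : ∑ i ∈ Finset.univ.erase z, w₁ i = -w₁ z := by
      have := Finset.add_sum_erase Finset.univ w₁ (Finset.mem_univ z)
      rw [h1] at this
      linear_combination (norm := abel) this
    have e2 : ∑ i ∈ Finset.univ.erase z, w₂ i = -sp • w₂ z := by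
      have := Finset.add_sum_erase Finset.univ w₂ (Finset.mem_univ z)
      rw [h2] at this
      have : ∑ i ∈ Finset.univ.erase z, w₂ i = (1 - sp) • w₂ z - w₂ z := by
        linear_combination (norm := abel) this
      rw [this, sub_smul, one_smul, neg_smul]
      abel
    rw [Finset.sum_sub_distrib, e1, e2, hw2, smul_smul, ← neg_one_smul ℚ (w₁ z),
      ← sub_smul]
    congr 1
    ring
  have hcoef : (∑ i ∈ Finset.univ.erase z, a i) * r₁ = -1 - sp * (r₁ / r₂) := by
    by_contra h
    exact h5 (by
      have := sub_eq_zero.mpr key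
      rw [← sub_smul] at this
      rcases smul_eq_zero.mp this with h' | h'
      · exact absurd (sub_eq_zero.mp h') h
      · exact absurd h' h5)
  have hS : ∑ i ∈ Finset.univ.erase z, a i = (-1 - sp * (r₁ / r₂)) / r₁ :=
    eq_div_of_mul_eq hr₁.ne' hcoef
  rw [hS]
  field_simp
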